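/- Let M ≥ 1 and let S ⊆ ℝ^M be a nonempty compact set contained in the nonnegative orthant that is downward closed within the orthant: if u ∈ S and v ∈ ℝ^M satisfies 0 ≤ v^(m) ≤ u^(m) for all m, then v ∈ S. For w with all coordinates positive define the radial function r_S(w) = sup{ r ≥ 0 : r·w ∈ S }. Then vol(S) = c_M · 𝔼_w[ r_S(w)^M ], where w is drawn uniformly from W⁺. -/

import Mathlib

open MeasureTheory
open Set Metric
open scoped ENNReal Pointwise

lemma hyperplane_null (M : ℕ) (m : Fin M) :
    volume {x : EuclideanSpace ℝ (Fin M) | x m = 0} = 0 := by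
  have hproj : ∃ l : EuclideanSpace ℝ (Fin M) →ₗ[ℝ] ℝ, ∀ x, l x = x m :=
    ⟨(LinearMap.proj m : ((i : Fin M) → ℝ) →ₗ[ℝ] ℝ).comp
      (WithLp.linearEquiv 2 ℝ ((i : Fin M) → ℝ)).toLinearMap, fun x => rfl⟩
  obtain ⟨l, hl⟩ := hproj
  have hset : {x : EuclideanSpace ℝ (Fin M) | x m = 0} = (LinearMap.ker l : Set _) := by
    ext x; simp [LinearMap.mem_ker, hl]
  rw [hset]
  apply Measure.addHaar_submodule
  intro h
  have h1 : EuclideanSpace.single m (1:ℝ) ∈ LinearMap.ker l := h ▸ Submodule.mem_top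
  rw [LinearMap.mem_ker, hl] at h1
  simp [EuclideanSpace.single_apply] at h1

lemma euclidean_apply_continuous (M : ℕ) (m : Fin M) :
    Continuous fun x : EuclideanSpace ℝ (Fin M) => x m := by
  exact (continuous_apply m).comp (PiLp.continuous_ofLp ..)

lemma orthant_volume (M : ℕ) :
    volume (ball (0 : EuclideanSpace ℝ (Fin M)) 1 ∩ {x | ∀ m, 0 < x m})
      = volume (ball (0 : EuclideanSpace ℝ (Fin M)) 1) / 2 ^ M := by
  classical
  set E := EuclideanSpace ℝ (Fin M)
  set B := ball (0 : E) 1 with hB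
  have hc : ∀ m : Fin M, Continuous fun x : E => x m := euclidean_apply_continuous M
  set L : (Fin M → Bool) → (E ≃ₗᵢ[ℝ] E) := fun ε => LinearIsometryEquiv.piLpCongrRight 2
      (fun m => if ε m then LinearIsometryEquiv.neg ℝ else LinearIsometryEquiv.refl ℝ ℝ) with hL
  have hLapp : ∀ ε x m, (L ε x : E) m = if ε m then -(x m) else x m := by
    intro ε x m
    rw [hL, LinearIsometryEquiv.piLpCongrRight_apply]
    cases h : ε m <;> simp [h]
  set P : (Fin M → Bool) → Set E := fun ε => {x | ∀ m, 0 < (if ε m then -(x m) else x m)} with hP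
  have hPm : ∀ ε, MeasurableSet (B ∩ P ε) := by
    intro ε
    refine measurableSet_ball.inter ?_
    have : P ε = ⋂ m, {x : E | 0 < (if ε m then -(x m) else x m)} := by
      ext x; simp [hP]
    rw [this]
    refine MeasurableSet.iInter fun m => ?_
    cases h : ε m
    · simp only [h, Bool.false_eq_true, if_false]
      exact measurableSet_lt measurable_const (hc m).measurable
    · simp only [h, if_true]
      exact measurableSet_lt measurable_const (hc m).measurable.neg
  have hpre : ∀ ε, (L ε) ⁻¹' (B ∩ P (fun _ => false)) = B ∩ P ε := by
    intro ε
    ext x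
    simp only [Set.mem_preimage, Set.mem_inter_iff, hB, mem_ball, dist_zero_right, hP,
      Set.mem_setOf_eq, Bool.false_eq_true, if_false]
    constructor
    · rintro ⟨h1, h2⟩
      refine ⟨by rwa [LinearIsometryEquiv.norm_map] at h1, fun m => by
        have := h2 m; rwa [hLapp] at this⟩
    · rintro ⟨h1, h2⟩
      refine ⟨by rwa [LinearIsometryEquiv.norm_map], fun m => by rw [hLapp]; exact h2 m⟩
  have hvol : ∀ ε, volume (B ∩ P ε) = volume (B ∩ P (fun _ => false)) := by
    intro ε
    rw [← hpre ε]
    exact (L ε).measurePreserving.measure_preimage (hPm _).nullMeasurableSet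
  have hunion : (⋃ ε, B ∩ P ε) = B ∩ {x | ∀ m, x m ≠ 0} := by
    ext x
    simp only [Set.mem_iUnion, Set.mem_inter_iff, Set.mem_setOf_eq, hP]
    constructor
    · rintro ⟨ε, hxB, hx⟩
      refine ⟨hxB, fun m => ?_⟩
      have h := hx m
      cases hεm : ε m
      · rw [if_neg (by simp [hεm])] at h; exact ne_of_gt h
      · rw [if_pos (by simp [hεm])] at h; intro h0; rw [h0] at h; simp at h
    · rintro ⟨hxB, hx⟩
      refine ⟨fun m => decide (x m < 0), hxB, fun m => ?_⟩
      rcases lt_or_gt_of_ne (hx m) with h | h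
      · rw [if_pos (by simpa using h)]; linarith
      · rw [if_neg (by simpa using not_lt.2 h.le)]; exact h
  have hdisj : Pairwise (Function.onFun Disjoint fun ε => B ∩ P ε) := by
    intro ε ε' hne
    obtain ⟨m, hm⟩ := Function.ne_iff.1 hne
    refine Set.disjoint_left.2 fun x hx hx' => ?_
    have h1 := hx.2 m
    have h2 := hx'.2 m
    cases hεm : ε m <;> cases hεm' : ε' m
    · exact hm (by rw [hεm, hεm'])
    · rw [if_neg (by simp [hεm])] at h1; rw [if_pos (by simp [hεm'])] at h2; linarith
    · rw [if_pos (by simp [hεm])] at h1; rw [if_neg (by simp [hεm'])] at h2; linarith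
    · exact hm (by rw [hεm, hεm'])
  have hsum : volume (B ∩ {x : E | ∀ m, x m ≠ 0})
      = (2:ℝ≥0∞)^M * volume (B ∩ P (fun _ => false)) := by
    rw [← hunion, measure_iUnion hdisj hPm, tsum_fintype]
    simp only [hvol]
    rw [Finset.sum_const, Finset.card_univ, nsmul_eq_mul]
    norm_cast
    rw [Fintype.card_fun]
    simp
  have hmes : MeasurableSet {x : E | ∀ m, x m ≠ 0} := by
    have : {x : E | ∀ m, x m ≠ 0} = ⋂ m, {x : E | x m = 0}ᶜ := by ext x; simp
    rw [this]
    exact MeasurableSet.iInter fun m =>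
      ((hc m).measurable (measurableSet_singleton 0)).compl
  have hnull : volume (B \ {x : E | ∀ m, x m ≠ 0}) = 0 := by
    refine measure_mono_null (fun x hx => ?_) (measure_iUnion_null fun m => hyperplane_null M m)
    obtain ⟨-, hx2⟩ := hx
    simp only [Set.mem_setOf_eq, not_forall, not_not] at hx2
    obtain ⟨m, hm⟩ := hx2
    exact Set.mem_iUnion.2 ⟨m, hm⟩
  have hBeq : volume B = (2:ℝ≥0∞)^M * volume (B ∩ P (fun _ => false)) := by
    rw [← hsum, ← measure_inter_add_diff B hmes, hnull, add_zero]
  have hPfalse : P (fun _ => false) = {x : E | ∀ m, 0 < x m} := by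
    ext x; simp [hP]
  rw [← hPfalse, hBeq, mul_comm, mul_div_assoc,
    ENNReal.div_self (pow_ne_zero _ two_ne_zero) (ENNReal.pow_ne_top ENNReal.ofNat_ne_top),
    mul_one]

/-- The dimension-dependent constant `c_M = π^{M/2} / (2^M · Γ(M/2 + 1))`. -/
noncomputable def cM (M : ℕ) : ℝ :=
  Real.pi ^ ((M : ℝ) / 2) / (2 ^ M * Real.Gamma ((M : ℝ) / 2 + 1))

/-- The positive part `W⁺` of the unit sphere in `ℝ^M`. -/
def Wpos (M : ℕ) : Set (Metric.sphere (0 : EuclideanSpace ℝ (Fin M)) 1) :=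
  {w | ∀ m, 0 < (w : EuclideanSpace ℝ (Fin M)) m}

/-- The rotation-invariant surface measure on the unit sphere in `ℝ^M`. -/
noncomputable def sphereMeasure (M : ℕ) :
    Measure (Metric.sphere (0 : EuclideanSpace ℝ (Fin M)) 1) :=
  (volume : Measure (EuclideanSpace ℝ (Fin M))).toSphere

lemma Wpos_measurable (M : ℕ) : MeasurableSet (Wpos M) := by
  have : Wpos M = ⋂ m, {w : Metric.sphere (0 : EuclideanSpace ℝ (Fin M)) 1 |
      0 < (w : EuclideanSpace ℝ (Fin M)) m} := by
    ext w; simp [Wpos]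
  rw [this]
  exact MeasurableSet.iInter fun m => measurableSet_lt measurable_const
    (((euclidean_apply_continuous M m).comp continuous_subtype_val).measurable)

lemma cM_pos (M : ℕ) : 0 < cM M := by
  have h1 : (0:ℝ) < Real.pi ^ ((M:ℝ)/2) := Real.rpow_pos_of_pos Real.pi_pos _
  have h2 : (0:ℝ) < Real.Gamma ((M:ℝ)/2 + 1) := Real.Gamma_pos_of_pos (by positivity)
  exact div_pos h1 (by positivity)

lemma sqrt_pi_pow (M : ℕ) : Real.sqrt Real.pi ^ M = Real.pi ^ ((M:ℝ)/2) := by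
  rw [Real.sqrt_eq_rpow, ← Real.rpow_natCast (Real.pi ^ ((1:ℝ)/2)) M,
    ← Real.rpow_mul Real.pi_pos.le]
  ring_nf

lemma sphereMeasure_Wpos (M : ℕ) (hM : 1 ≤ M) :
    sphereMeasure M (Wpos M) = ENNReal.ofReal (M * cM M) := by
  classical
  set E := EuclideanSpace ℝ (Fin M)
  have himg : Ioo (0:ℝ) 1 • (Subtype.val '' Wpos M) = ball (0:E) 1 ∩ {x | ∀ m, 0 < x m} := by
    ext x
    constructor
    · intro hx
      obtain ⟨r, hr, y, hy, rfl⟩ := Set.mem_smul.1 hx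
      obtain ⟨w, hw, rfl⟩ := hy
      have hnorm : ‖(w : E)‖ = 1 := mem_sphere_zero_iff_norm.1 w.2
      constructor
      · rw [mem_ball, dist_zero_right, norm_smul, hnorm, mul_one, Real.norm_eq_abs,
          abs_of_pos hr.1]
        exact hr.2
      · intro m
        have : (r • (w : E)) m = r * (w : E) m := rfl
        exact this ▸ mul_pos hr.1 (hw m)
    · rintro ⟨hxb, hxp⟩
      have hx0 : x ≠ 0 := by
        intro h
        have := hxp ⟨0, hM⟩
        rw [h] at this
        simp at this
      have hn : 0 < ‖x‖ := norm_pos_iff.2 hx0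
      have hw : (‖x‖⁻¹ • x : E) ∈ Metric.sphere (0:E) 1 := by
        rw [mem_sphere_zero_iff_norm, norm_smul, norm_inv, norm_norm, inv_mul_cancel₀ hn.ne']
      refine Set.mem_smul.2 ⟨‖x‖, ⟨hn, by rwa [mem_ball, dist_zero_right] at hxb⟩,
        ‖x‖⁻¹ • x, ⟨⟨‖x‖⁻¹ • x, hw⟩, fun m => ?_, rfl⟩, smul_inv_smul₀ hn.ne' x⟩
      show (0:ℝ) < (‖x‖⁻¹ • x : E) m
      have : ((‖x‖⁻¹ • x : E)) m = ‖x‖⁻¹ * x m := rfl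
      rw [this]
      exact mul_pos (inv_pos.2 hn) (hxp m)
  haveI : Nonempty (Fin M) := ⟨⟨0, hM⟩⟩
  have := Measure.toSphere_apply' (volume : Measure E) (Wpos_measurable M)
  rw [sphereMeasure, this, himg, finrank_euclideanSpace_fin, orthant_volume M,
    EuclideanSpace.volume_ball]
  have hΓ : 0 < Real.Gamma ((M:ℝ)/2 + 1) := Real.Gamma_pos_of_pos (by positivity)
  rw [Fintype.card_fin, ENNReal.ofReal_one, one_pow, one_mul]
  rw [show ((2:ℝ≥0∞)^M) = ENNReal.ofReal ((2:ℝ)^M) by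
    rw [ENNReal.ofReal_pow (by norm_num)]; norm_num]
  rw [← ENNReal.ofReal_div_of_pos (by positivity), ← ENNReal.ofReal_natCast M,
    ← ENNReal.ofReal_mul (by positivity)]
  congr 1
  rw [cM, sqrt_pi_pow]
  field_simp

theorem volume_eq_average_radial_pow {M : ℕ} (hM : 1 ≤ M)
    (S : Set (EuclideanSpace ℝ (Fin M))) (hne : S.Nonempty) (hcomp : IsCompact S)
    (horth : ∀ u ∈ S, ∀ m, 0 ≤ u m)
    (hdc : ∀ u ∈ S, ∀ v : EuclideanSpace ℝ (Fin M),
      (∀ m, 0 ≤ v m ∧ v m ≤ u m) → v ∈ S) :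
    (volume S).toReal =
      cM M * ⨍ w in Wpos M,
        (sSup {r : ℝ | 0 ≤ r ∧ r • (w : EuclideanSpace ℝ (Fin M)) ∈ S}) ^ M
        ∂(sphereMeasure M) := by
  classical
  haveI : Nonempty (Fin M) := ⟨⟨0, hM⟩⟩
  have hM0 : (M:ℝ) ≠ 0 := Nat.cast_ne_zero.2 (by omega)
  obtain ⟨u0, hu0⟩ := hne
  have h0S : (0 : EuclideanSpace ℝ (Fin M)) ∈ S := by
    refine hdc u0 hu0 0 (fun m => ⟨le_rfl, ?_⟩)
    show (0:ℝ) ≤ u0 m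
    exact horth u0 hu0 m
  obtain ⟨R, hR⟩ := hcomp.isBounded.subset_closedBall 0
  set A : Metric.sphere (0 : EuclideanSpace ℝ (Fin M)) 1 → Set ℝ :=
    fun w => {r : ℝ | 0 ≤ r ∧ r • (w : EuclideanSpace ℝ (Fin M)) ∈ S} with hA
  set f : Metric.sphere (0 : EuclideanSpace ℝ (Fin M)) 1 → ℝ := fun w => sSup (A w) with hf
  have hsmul_apply : ∀ (r : ℝ) (x : EuclideanSpace ℝ (Fin M)) m, (r • x) m = r * x m :=
    fun _ _ _ => rfl
  have hA0 : ∀ w, 0 ∈ A w := fun w => ⟨le_rfl, by rw [zero_smul]; exact h0S⟩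
  have hAbdd : ∀ w, BddAbove (A w) := by
    intro w
    refine ⟨R, fun r hr => ?_⟩
    have h1 : ‖r • (w : EuclideanSpace ℝ (Fin M))‖ ≤ R := by
      have := hR hr.2; rwa [mem_closedBall, dist_zero_right] at this
    rwa [norm_smul, mem_sphere_zero_iff_norm.1 w.2, mul_one, Real.norm_eq_abs,
      abs_of_nonneg hr.1] at h1
  have hAclosed : ∀ w, IsClosed (A w) := by
    intro w
    have : A w = Set.Ici (0:ℝ) ∩ (fun r : ℝ => r • (w : EuclideanSpace ℝ (Fin M))) ⁻¹' S := by
      ext r; simp [hA, Set.mem_Ici]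
    rw [this]
    exact isClosed_Ici.inter (hcomp.isClosed.preimage (continuous_id.smul continuous_const))
  have hfmem : ∀ w, f w ∈ A w := fun w => (hAclosed w).csSup_mem ⟨0, hA0 w⟩ (hAbdd w)
  have hfnn : ∀ w, 0 ≤ f w := fun w => (hfmem w).1
  have hdown : ∀ w r, r ∈ A w → ∀ r', 0 ≤ r' → r' ≤ r → r' ∈ A w := by
    intro w r hr r' h0 hle
    by_cases hw : ∀ m, 0 ≤ (w : EuclideanSpace ℝ (Fin M)) m
    · refine ⟨h0, hdc _ hr.2 _ (fun m => ⟨?_, ?_⟩)⟩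
      · rw [hsmul_apply]; exact mul_nonneg h0 (hw m)
      · rw [hsmul_apply, hsmul_apply]; exact mul_le_mul_of_nonneg_right hle (hw m)
    · push_neg at hw
      obtain ⟨m, hm⟩ := hw
      have hr0 : r = 0 := by
        have h1 := horth _ hr.2 m
        rw [hsmul_apply] at h1
        nlinarith [hr.1]
      have hr'0 : r' = 0 := le_antisymm (hr0 ▸ hle) h0
      rw [hr'0]; exact hA0 w
  have hAicc : ∀ w, A w = Set.Icc 0 (f w) := by
    intro w
    ext r
    constructor
    · intro h; exact ⟨h.1, le_csSup (hAbdd w) h⟩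
    · intro h; exact hdown w (f w) (hfmem w) r h.1 h.2
  have hzero : ∀ w : Metric.sphere (0 : EuclideanSpace ℝ (Fin M)) 1,
      (∃ m, (w : EuclideanSpace ℝ (Fin M)) m < 0) → f w = 0 := by
    rintro w ⟨m, hm⟩
    refine le_antisymm (csSup_le ⟨0, hA0 w⟩ fun r hr => ?_) (hfnn w)
    have h1 := horth _ hr.2 m
    rw [hsmul_apply] at h1
    nlinarith [hr.1]
  have hfmeas : Measurable f := by
    apply measurable_of_Iio
    intro a
    rcases le_or_gt a 0 with ha | ha
    · have : f ⁻¹' Set.Iio a = ∅ := by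
        refine Set.eq_empty_iff_forall_notMem.2 fun w hw => ?_
        rw [Set.mem_preimage, Set.mem_Iio] at hw
        exact absurd (lt_of_le_of_lt (hfnn w) hw) (not_lt.2 ha)
      rw [this]; exact MeasurableSet.empty
    · have : f ⁻¹' Set.Iio a =
          ((fun w : Metric.sphere (0 : EuclideanSpace ℝ (Fin M)) 1 =>
            a • (w : EuclideanSpace ℝ (Fin M))) ⁻¹' S)ᶜ := by
        ext w
        simp only [Set.mem_preimage, Set.mem_Iio, Set.mem_compl_iff]
        constructor
        · intro h hmem
          have hmem' : a ∈ A w := ⟨ha.le, hmem⟩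
          rw [hAicc w] at hmem'
          exact absurd h (not_lt.2 hmem'.2)
        · intro h
          by_contra h'
          push_neg at h'
          have hmem' : a ∈ A w := by rw [hAicc w]; exact ⟨ha.le, h'⟩
          exact h hmem'.2
      rw [this]
      exact ((hcomp.isClosed.preimage
        (continuous_subtype_val.const_smul a)).measurableSet).compl
  -- polar decomposition
  set T : Set (Metric.sphere (0 : EuclideanSpace ℝ (Fin M)) 1 × Set.Ioi (0:ℝ)) :=
    {p | ((p.2 : ℝ)) • (p.1 : EuclideanSpace ℝ (Fin M)) ∈ S} with hT
  have hTc : Continuous fun p : Metric.sphere (0 : EuclideanSpace ℝ (Fin M)) 1 × Set.Ioi (0:ℝ) =>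
      ((p.2 : ℝ)) • (p.1 : EuclideanSpace ℝ (Fin M)) :=
    (continuous_subtype_val.comp continuous_snd).smul (continuous_subtype_val.comp continuous_fst)
  have hTm : MeasurableSet T := (hcomp.isClosed.preimage hTc).measurableSet
  have key := (volume : Measure (EuclideanSpace ℝ (Fin M))).measurePreserving_homeomorphUnitSphereProd
  have hS1 : volume S =
      ((volume : Measure (EuclideanSpace ℝ (Fin M))).toSphere.prod
        (Measure.volumeIoiPow (M - 1))) T := by
    have hemb : MeasurableEmbedding
        (Subtype.val : ({0}ᶜ : Set (EuclideanSpace ℝ (Fin M))) → EuclideanSpace ℝ (Fin M)) :=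
      MeasurableEmbedding.subtype_coe (measurableSet_singleton (0:EuclideanSpace ℝ (Fin M))).compl
    have hpre : (homeomorphUnitSphereProd (EuclideanSpace ℝ (Fin M))) ⁻¹' T
        = Subtype.val ⁻¹' S := by
      ext x
      simp only [Set.mem_preimage, hT, Set.mem_setOf_eq,
        homeomorphUnitSphereProd_apply_snd_coe, homeomorphUnitSphereProd_apply_fst_coe]
      rw [smul_inv_smul₀ (norm_ne_zero_iff.2 x.2)]
    have h1 := key.measure_preimage hTm.nullMeasurableSet
    rw [hpre, hemb.comap_apply, Subtype.image_preimage_coe] at h1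
    rw [finrank_euclideanSpace_fin] at h1
    rw [← h1]
    rw [show ({0}ᶜ : Set (EuclideanSpace ℝ (Fin M))) ∩ S = S \ {0} by
      rw [Set.inter_comm, Set.diff_eq]]
    rw [measure_diff_null (measure_singleton _)]
  have hslice : ∀ w : Metric.sphere (0 : EuclideanSpace ℝ (Fin M)) 1,
      Measure.volumeIoiPow (M-1)
        {r : Set.Ioi (0:ℝ) | (r : ℝ) • (w : EuclideanSpace ℝ (Fin M)) ∈ S}
        = ENNReal.ofReal (f w ^ M / M) := by
    intro w
    rcases eq_or_lt_of_le (hfnn w) with hc | hc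
    · have hempty : {r : Set.Ioi (0:ℝ) | (r : ℝ) • (w : EuclideanSpace ℝ (Fin M)) ∈ S} = ∅ := by
        refine Set.eq_empty_iff_forall_notMem.2 fun r hr => ?_
        have hmem : (r:ℝ) ∈ A w := ⟨le_of_lt r.2, hr⟩
        rw [hAicc w] at hmem
        have h2 := hmem.2
        have hrpos : (0:ℝ) < r := r.2
        rw [← hc] at h2; linarith
      rw [hempty, measure_empty, ← hc, zero_pow (by omega), zero_div, ENNReal.ofReal_zero]
    · have hset : {r : Set.Ioi (0:ℝ) | (r : ℝ) • (w : EuclideanSpace ℝ (Fin M)) ∈ S}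
          = Set.Iio (⟨f w, hc⟩ : Set.Ioi (0:ℝ)) ∪ {(⟨f w, hc⟩ : Set.Ioi (0:ℝ))} := by
        ext r
        simp only [Set.mem_setOf_eq, Set.mem_union, Set.mem_Iio, Set.mem_singleton_iff]
        constructor
        · intro hr
          have hmem : (r:ℝ) ∈ A w := ⟨le_of_lt r.2, hr⟩
          rw [hAicc w] at hmem
          rcases lt_or_eq_of_le hmem.2 with h | h
          · exact Or.inl (Subtype.coe_lt_coe.1 (by exact h))
          · exact Or.inr (Subtype.ext h)
        · intro hr
          rcases hr with h | h
          · have hlt : (r:ℝ) < f w := Subtype.coe_lt_coe.2 h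
            have hmem : (r:ℝ) ∈ A w := by
              rw [hAicc w]; exact ⟨le_of_lt r.2, hlt.le⟩
            exact hmem.2
          · rw [h]
            have hmem : f w ∈ A w := hfmem w
            exact hmem.2
      have hsing : Measure.volumeIoiPow (M-1) {(⟨f w, hc⟩ : Set.Ioi (0:ℝ))} = 0 := by
        have hcm : (Measure.comap (Subtype.val : Set.Ioi (0:ℝ) → ℝ) volume)
            {(⟨f w, hc⟩ : Set.Ioi (0:ℝ))} = 0 := by
          rw [(MeasurableEmbedding.subtype_coe measurableSet_Ioi).comap_apply,
            Set.image_singleton]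
          exact Real.volume_singleton
        rw [Measure.volumeIoiPow, withDensity_apply _ (measurableSet_singleton _),
          setLIntegral_measure_zero _ _ hcm]
      rw [hset]
      have hle1 : Measure.volumeIoiPow (M-1)
          (Set.Iio (⟨f w, hc⟩ : Set.Ioi (0:ℝ)) ∪ {(⟨f w, hc⟩ : Set.Ioi (0:ℝ))})
          = Measure.volumeIoiPow (M-1) (Set.Iio (⟨f w, hc⟩ : Set.Ioi (0:ℝ))) := by
        refine le_antisymm ((measure_union_le _ _).trans ?_) (measure_mono Set.subset_union_left)
        rw [hsing, add_zero]
      rw [hle1, Measure.volumeIoiPow_apply_Iio]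
      have hcast : ((M - 1 : ℕ) : ℝ) + 1 = (M : ℝ) := by
        rw [Nat.cast_sub hM]; ring
      rw [Nat.sub_add_cancel hM, hcast]
  have hS2 : volume S = ∫⁻ w, ENNReal.ofReal (f w ^ M / M)
      ∂(volume : Measure (EuclideanSpace ℝ (Fin M))).toSphere := by
    rw [hS1, Measure.prod_apply hTm]
    exact lintegral_congr fun w => hslice w
  -- restrict to Wpos
  have hNnull : (volume : Measure (EuclideanSpace ℝ (Fin M))).toSphere
      (⋃ m, {w : Metric.sphere (0 : EuclideanSpace ℝ (Fin M)) 1 |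
        (w : EuclideanSpace ℝ (Fin M)) m = 0}) = 0 := by
    have hNm : MeasurableSet (⋃ m, {w : Metric.sphere (0 : EuclideanSpace ℝ (Fin M)) 1 |
        (w : EuclideanSpace ℝ (Fin M)) m = 0}) :=
      MeasurableSet.iUnion fun m =>
        (((euclidean_apply_continuous M m).comp continuous_subtype_val).measurable
          (measurableSet_singleton 0))
    rw [Measure.toSphere_apply' _ hNm]
    have hsub : Set.Ioo (0:ℝ) 1 •
        (Subtype.val '' (⋃ m, {w : Metric.sphere (0 : EuclideanSpace ℝ (Fin M)) 1 |
          (w : EuclideanSpace ℝ (Fin M)) m = 0}))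
        ⊆ ⋃ m, {x : EuclideanSpace ℝ (Fin M) | x m = 0} := by
      intro x hx
      obtain ⟨r, hr, y, ⟨w, hw, rfl⟩, rfl⟩ := Set.mem_smul.1 hx
      obtain ⟨mS, hmS⟩ := Set.mem_iUnion.1 hw
      refine Set.mem_iUnion.2 ⟨mS, ?_⟩
      show (r • (w : EuclideanSpace ℝ (Fin M))) mS = 0
      rw [hsmul_apply, hmS, mul_zero]
    rw [measure_mono_null hsub (measure_iUnion_null fun m => hyperplane_null M m), mul_zero]
  have hae : ∀ᵐ w ∂(volume : Measure (EuclideanSpace ℝ (Fin M))).toSphere,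
      ENNReal.ofReal (f w ^ M / M)
      = (Wpos M).indicator (fun w => ENNReal.ofReal (f w ^ M / M)) w := by
    filter_upwards [compl_mem_ae_iff.2 hNnull] with w hw
    by_cases hwp : w ∈ Wpos M
    · rw [Set.indicator_of_mem hwp]
    · rw [Set.indicator_of_notMem hwp]
      have hneg : ∃ m, (w : EuclideanSpace ℝ (Fin M)) m < 0 := by
        simp only [Wpos, Set.mem_setOf_eq, not_forall] at hwp
        obtain ⟨m, hm⟩ := hwp
        refine ⟨m, lt_of_le_of_ne (not_lt.1 hm) ?_⟩
        intro h
        exact hw (Set.mem_iUnion.2 ⟨m, h⟩)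
      rw [hzero w hneg, zero_pow (by omega), zero_div, ENNReal.ofReal_zero]
  have hS3 : volume S = ∫⁻ w in Wpos M, ENNReal.ofReal (f w ^ M / M)
      ∂(volume : Measure (EuclideanSpace ℝ (Fin M))).toSphere := by
    rw [hS2, lintegral_congr_ae hae, lintegral_indicator (Wpos_measurable M)]
  have hint : ∫ w in Wpos M, (f w ^ M / M)
      ∂(volume : Measure (EuclideanSpace ℝ (Fin M))).toSphere = (volume S).toReal := by
    rw [integral_eq_lintegral_of_nonneg_ae
      (Filter.Eventually.of_forall fun w =>
        div_nonneg (pow_nonneg (hfnn w) M) (Nat.cast_nonneg M))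
      ((hfmeas.pow_const M).div_const _).aestronglyMeasurable]
    rw [← hS3]
  -- final arithmetic
  have hintM : ∫ w in Wpos M, f w ^ M
      ∂(volume : Measure (EuclideanSpace ℝ (Fin M))).toSphere = M * (volume S).toReal := by
    have h := hint
    rw [integral_div] at h
    field_simp at h
    linarith [h]
  show (volume S).toReal = cM M * ⨍ w in Wpos M, f w ^ M ∂(sphereMeasure M)
  rw [setAverage_eq, sphereMeasure]
  rw [hintM, measureReal_def, show (volume : Measure (EuclideanSpace ℝ (Fin M))).toSphere (Wpos M)
      = ENNReal.ofReal (M * cM M) from sphereMeasure_Wpos M hM]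
  rw [ENNReal.toReal_ofReal (mul_nonneg (Nat.cast_nonneg M) (cM_pos M).le)]
  rw [smul_eq_mul]
  have hcM := cM_pos M
  field_simp
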